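/- With A = Z[X]/(X²), ι₀: A → A⊗A, a ↦ 1⊗a, and j₀ = Δ - ι₀ ∘ m ∘ Δ: A → A⊗A, the maps ι₀ and j₀ are injective and A ⊗ A = ι₀(A) ⊕ j₀(A) as abelian groups. -/

import Mathlib

open TensorProduct

noncomputable section

/-- `A = ℤ[X]/(X²)`, realized as dual numbers over `ℤ`. -/
abbrev A : Type := DualNumber ℤ

/-- The generator `X` (with `X² = 0`). -/
def X : A := DualNumber.eps

/-- The comultiplication `Δ : A → A ⊗ A`, `Δ(1) = 1⊗X + X⊗1`, `Δ(X) = X⊗X`,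
extended `ℤ`-linearly. -/
def Δ : A →ₗ[ℤ] A ⊗[ℤ] A where
  toFun x := x.fst • ((1 : A) ⊗ₜ[ℤ] X + X ⊗ₜ[ℤ] (1 : A)) + x.snd • (X ⊗ₜ[ℤ] X)
  map_add' a b := by
    simp only [TrivSqZeroExt.fst_add, TrivSqZeroExt.snd_add, add_smul]
    abel
  map_smul' c a := by
    simp only [TrivSqZeroExt.fst_smul, TrivSqZeroExt.snd_smul, RingHom.id_apply, smul_add,
      smul_smul, smul_eq_mul]


/-- The multiplication `m : A ⊗ A → A`. -/
def m : A ⊗[ℤ] A →ₗ[ℤ] A := LinearMap.mul' ℤ A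

/-- `ι₀ : A → A ⊗ A`, `a ↦ 1 ⊗ a`. -/
def ι₀ : A →ₗ[ℤ] A ⊗[ℤ] A := TensorProduct.mk ℤ A A 1

/-- `j₀ = Δ - ι₀ ∘ m ∘ Δ : A → A ⊗ A`. -/
def j₀ : A →ₗ[ℤ] A ⊗[ℤ] A := Δ - ι₀ ∘ₗ m ∘ₗ Δ

/-!
The multiplication `m` retracts `ι₀` (as `1 * a = a`) and therefore kills `j₀ = (1 - ι₀ ∘ m) ∘ Δ`.
Dually, `π : x ⊗ y ↦ x.snd • y` kills `ι₀` and satisfies `π ∘ Δ = id`, so it retracts `j₀`.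
Hence `(m, π)` is a left inverse of `ι₀ ⊕ j₀ : A × A → A ⊗ A`; evaluating on the four tensors
`1 ⊗ 1, 1 ⊗ X, X ⊗ 1, X ⊗ X` shows it is a right inverse too, so `ι₀ ⊕ j₀` is an isomorphism.
-/

open LinearMap

open scoped DualNumber

namespace LinearMap

variable {R M N P : Type*} [Semiring R] [AddCommMonoid M] [AddCommMonoid N] [AddCommMonoid P]
  [Module R M] [Module R N] [Module R P] {f : M →ₗ[R] P} {g : N →ₗ[R] P}

theorem injective_of_bijective_coprod_left (h : Function.Bijective (f.coprod g)) :
    Function.Injective f := by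
  have := h.injective.comp (inl_injective (R := R) (M := M) (M₂ := N))
  rwa [← coe_comp, coprod_inl] at this

theorem injective_of_bijective_coprod_right (h : Function.Bijective (f.coprod g)) :
    Function.Injective g := by
  have := h.injective.comp (inr_injective (R := R) (M := M) (M₂ := N))
  rwa [← coe_comp, coprod_inr] at this

theorem isCompl_range_of_bijective_coprod (h : Function.Bijective (f.coprod g)) :
    IsCompl (range f) (range g) := by
  have hf : range f = (range (inl R M N)).map (f.coprod g) := by rw [← range_comp, coprod_inl]
  have hg : range g = (range (inr R M N)).map (f.coprod g) := by rw [← range_comp, coprod_inr]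
  rw [hf, hg]
  exact (Submodule.orderIsoMapComap (LinearEquiv.ofBijective _ h)).isCompl isCompl_range_inl_inr

end LinearMap

theorem DualNumber.linearMap_ext {R M : Type*} [Semiring R] [AddCommMonoid M] [Module R M]
    ⦃f g : R[ε] →ₗ[R] M⦄ (h1 : f 1 = g 1) (hε : f ε = g ε) : f = g := by
  refine TrivSqZeroExt.linearMap_ext (fun r => ?_) (fun r => ?_)
  · rw [← mul_one r, ← smul_eq_mul, TrivSqZeroExt.inl_smul, TrivSqZeroExt.inl_one, map_smul,
      map_smul, h1]
  · rw [DualNumber.inr_eq_smul_eps, map_smul, map_smul, hε]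

/-- Stated for `A` rather than `R[ε] ⊗[R] R[ε]`: the definitions give `A ⊗[ℤ] A` the `ℤ`-module
structure `AddCommGroup.toIntModule`, which is not reducibly the tensor product's own. -/
theorem A.tensorProduct_ext {M : Type*} [AddCommGroup M] ⦃f g : A ⊗[ℤ] A →ₗ[ℤ] M⦄
    (h11 : f (1 ⊗ₜ 1) = g (1 ⊗ₜ 1)) (h1X : f (1 ⊗ₜ X) = g (1 ⊗ₜ X))
    (hX1 : f (X ⊗ₜ 1) = g (X ⊗ₜ 1)) (hXX : f (X ⊗ₜ X) = g (X ⊗ₜ X)) : f = g :=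
  TensorProduct.ext <| DualNumber.linearMap_ext (DualNumber.linearMap_ext h11 h1X)
    (DualNumber.linearMap_ext hX1 hXX)

@[simp] theorem X_mul_X : X * X = 0 := DualNumber.eps_mul_eps

@[simp] theorem fst_X : X.fst = 0 := rfl

@[simp] theorem snd_X : X.snd = 1 := rfl

def π : A ⊗[ℤ] A →ₗ[ℤ] A :=
  TensorProduct.lid ℤ A ∘ₗ TensorProduct.map (TrivSqZeroExt.sndHom ℤ ℤ) LinearMap.id

@[simp] theorem π_tmul (x y : A) : π (x ⊗ₜ y) = x.snd • y := rfl

@[simp] theorem m_tmul (x y : A) : m (x ⊗ₜ y) = x * y := LinearMap.mul'_apply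

@[simp] theorem ι₀_apply (a : A) : ι₀ a = 1 ⊗ₜ a := rfl

theorem Δ_one : Δ 1 = 1 ⊗ₜ X + X ⊗ₜ 1 := by simp [Δ]

theorem Δ_X : Δ X = X ⊗ₜ X := by simp [Δ]

theorem j₀_one : j₀ 1 = X ⊗ₜ 1 - 1 ⊗ₜ X := by simp [j₀, Δ_one, TensorProduct.tmul_add]

theorem j₀_X : j₀ X = X ⊗ₜ X := by simp [j₀, Δ_X]

theorem m_comp_ι₀ : m ∘ₗ ι₀ = LinearMap.id := LinearMap.ext fun a => by simp

theorem π_comp_ι₀ : π ∘ₗ ι₀ = 0 := LinearMap.ext fun a => by simp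

theorem π_comp_Δ : π ∘ₗ Δ = LinearMap.id :=
  DualNumber.linearMap_ext (by simp [Δ_one]) (show π (Δ X) = X by simp [Δ_X])

theorem m_comp_j₀ : m ∘ₗ j₀ = 0 := by
  rw [j₀, comp_sub, ← comp_assoc, m_comp_ι₀, id_comp, sub_self]

theorem π_comp_j₀ : π ∘ₗ j₀ = LinearMap.id := by
  rw [j₀, comp_sub, ← comp_assoc, π_comp_ι₀, zero_comp, sub_zero, π_comp_Δ]

theorem prod_comp_coprod : m.prod π ∘ₗ ι₀.coprod j₀ = LinearMap.id := by
  ext1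
  · rw [comp_assoc, coprod_inl, prod_comp, m_comp_ι₀, π_comp_ι₀]
    rfl
  · rw [comp_assoc, coprod_inr, prod_comp, m_comp_j₀, π_comp_j₀]
    rfl

theorem coprod_comp_prod : ι₀.coprod j₀ ∘ₗ m.prod π = LinearMap.id := by
  apply A.tensorProduct_ext
  · simp
  · simp
  · simp [j₀_one]
  · simp [j₀_X]

theorem bijective_coprod_ι₀_j₀ : Function.Bijective (ι₀.coprod j₀) :=
  Function.bijective_iff_has_inverse.mpr
    ⟨m.prod π, LinearMap.congr_fun prod_comp_coprod, LinearMap.congr_fun coprod_comp_prod⟩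

/-- The maps `ι₀` and `j₀` are injective, and `A ⊗ A = ι₀(A) ⊕ j₀(A)` as abelian
groups. -/
theorem stmt17 :
    Function.Injective ι₀ ∧ Function.Injective j₀ ∧
    IsCompl (LinearMap.range ι₀) (LinearMap.range j₀) := by
  have h := bijective_coprod_ι₀_j₀
  exact ⟨injective_of_bijective_coprod_left h, injective_of_bijective_coprod_right h,
    isCompl_range_of_bijective_coprod h⟩
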